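/- Let N be a unital C*-algebra and let r be a nonnegative integer such that the set {(x₀, …, x_r) ∈ (N_sa)^{r+1} : there exist y₀, …, y_r ∈ N with y₀x₀ + ⋯ + y_r x_r = 1} is dense in (N_sa)^{r+1}, where N_sa denotes the set of self-adjoint elements of N. Let A be a separable C*-subalgebra of N containing the unit of N. Then there exists a separable C*-subalgebra B of N with A ⊆ B ⊆ N and 1 ∈ B such that the set {(x₀, …, x_r) ∈ (B_sa)^{r+1} : there exist y₀, …, y_r ∈ B with y₀x₀ + ⋯ + y_r x_r = 1} is dense in (B_sa)^{r+1}. -/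

import Mathlib

/-!
A closing-off argument. Starting from `C₀ = A`, enlarge the separable star subalgebra `Cₙ` to a
separable `Cₙ₊₁` which contains, for each tuple of a countable dense set of self-adjoint tuples of
`Cₙ`, approximants generating the unit as a left ideal together with their coefficients. This is
possible because countably many such approximants suffice to approximate a separable set. The
closure `B` of `⋃ Cₙ` is separable; a self-adjoint tuple of `B` is a limit of tuples of the
`Cₙ`, hence, after taking real parts, of self-adjoint tuples of the `Cₙ`, and so of tuples of
`B` generating the unit.
-/

/-- The set of `(r+1)`-tuples of *self-adjoint* elements of a unital star ring `D`
which generate `D` as a left ideal.  Density of this set in `(D_sa)^{r+1}` is the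
Brown–Pedersen characterization of real rank at most `r`. -/
def LgSa (r : ℕ) (D : Type*) [Ring D] [StarRing D] : Set (Fin (r + 1) → D) :=
  {x | (∀ i, IsSelfAdjoint (x i)) ∧ ∃ y : Fin (r + 1) → D, ∑ i, y i * x i = 1}

open Set Filter Topology TopologicalSpace

theorem exists_seq_of_forall_exists_rel {α : Type*} {P : α → Prop} {R : α → α → Prop}
    (h : ∀ a, P a → ∃ b, P b ∧ R a b) {a : α} (ha : P a) :
    ∃ f : ℕ → α, f 0 = a ∧ (∀ n, P (f n)) ∧ ∀ n, R (f n) (f (n + 1)) := by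
  choose next hnext using fun x : Subtype P => h x.1 x.2
  let step : Subtype P → Subtype P := fun x => ⟨next x, (hnext x).1⟩
  refine ⟨fun n => (step^[n] ⟨a, ha⟩).1, rfl, fun n => (step^[n] _).2, fun n => ?_⟩
  simp only [Function.iterate_succ_apply']
  exact (hnext _).2

theorem TopologicalSpace.IsSeparable.exists_countable_subset_closure {X : Type*}
    [TopologicalSpace X] [PseudoMetrizableSpace X] {s U : Set X} (hs : IsSeparable s)
    (hsU : s ⊆ closure U) : ∃ c ⊆ U, c.Countable ∧ s ⊆ closure c := by
  obtain ⟨d, hds, hdc, hsd⟩ := hs.exists_countable_dense_subset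
  choose! u huU hu using fun x (hx : x ∈ d) => mem_closure_iff_seq_limit.1 (hsU (hds hx))
  refine ⟨⋃ x ∈ d, range (u x), iUnion₂_subset fun x hx => range_subset_iff.2 (huU x hx),
    hdc.biUnion fun _ _ => countable_range _, hsd.trans (closure_minimal ?_ isClosed_closure)⟩
  exact fun x hx => mem_closure_of_tendsto (hu x hx)
    (Eventually.of_forall fun n => mem_biUnion hx (mem_range_self n))

theorem TopologicalSpace.IsSeparable.submonoidClosure {M : Type*} [Monoid M] [TopologicalSpace M]
    [ContinuousMul M] {s : Set M} (hs : IsSeparable s) :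
    IsSeparable (Submonoid.closure s : Set M) := by
  have hsub : (Submonoid.closure s : Set M) ⊆
      ⋃ n, (fun f : Fin n → M => (List.ofFn f).prod) '' {f | ∀ i, f i ∈ s} := by
    intro x hx
    obtain ⟨l, hl, rfl⟩ := Submonoid.exists_list_of_mem_closure hx
    exact mem_iUnion.2 ⟨l.length, l.get, fun i => hl _ (List.get_mem l i), by simp⟩
  refine IsSeparable.mono (.iUnion fun n => (isSeparable_pi fun _ => hs).image ?_) hsub
  simp_rw [List.ofFn_eq_map]
  exact continuous_list_prod _ fun i _ => continuous_apply i

theorem TopologicalSpace.IsSeparable.starAlgebraAdjoin {R A : Type*} [CommSemiring R]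
    [StarRing R] [TopologicalSpace R] [SeparableSpace R] [Semiring A] [StarRing A]
    [Algebra R A] [StarModule R A] [TopologicalSpace A] [ContinuousAdd A] [ContinuousMul A]
    [ContinuousStar A] [ContinuousSMul R A] {s : Set A} (hs : IsSeparable s) :
    IsSeparable (StarAlgebra.adjoin R s : Set A) := by
  have h := congrArg ((↑) : Submodule R A → Set A) (StarAlgebra.adjoin_eq_span (R := R) s)
  rw [Subalgebra.coe_toSubmodule] at h
  rw [← StarSubalgebra.coe_toSubalgebra, h, ← Set.image_star]
  exact (hs.union (hs.image continuous_star)).submonoidClosure.span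

theorem map_mem_lgSa {r : ℕ} {C D F : Type*} [Ring C] [StarRing C] [Ring D] [StarRing D]
    [FunLike F C D] [RingHomClass F C D] [StarHomClass F C D] (φ : F) {x : Fin (r + 1) → C}
    (hx : x ∈ LgSa r C) : φ ∘ x ∈ LgSa r D := by
  obtain ⟨hsa, y, hy⟩ := hx
  refine ⟨fun i => (hsa i).map φ, φ ∘ y, ?_⟩
  simpa only [Function.comp_apply, map_sum, map_mul, map_one] using congrArg φ hy

section StarSubalgebra

variable {r : ℕ} {R A : Type*} [CommRing R] [StarRing R] [Ring A] [StarRing A] [Algebra R A]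
  [StarModule R A]

theorem image_val_lgSa_mono {C D : StarSubalgebra R A} (h : C ≤ D) :
    Pi.map (fun _ => Subtype.val) '' LgSa r C ⊆ Pi.map (fun _ => Subtype.val) '' LgSa r D := by
  rintro _ ⟨x, hx, rfl⟩
  exact ⟨_, map_mem_lgSa (StarSubalgebra.inclusion h) hx, rfl⟩

theorem exists_countable_subset_closure_image_lgSa [TopologicalSpace A] [PseudoMetrizableSpace A]
    {X : Set (Fin (r + 1) → A)} (hX : IsSeparable X) (hXA : X ⊆ closure (LgSa r A)) :
    ∃ t : Set A, t.Countable ∧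
      X ⊆ closure (Pi.map (fun _ => Subtype.val) '' LgSa r (StarAlgebra.adjoin R t)) := by
  obtain ⟨c, hcA, hcc, hXc⟩ := hX.exists_countable_subset_closure hXA
  choose! y hy using fun z (hz : z ∈ c) => (hcA hz).2
  refine ⟨⋃ z ∈ c, range z ∪ range (y z),
    hcc.biUnion fun _ _ => (countable_range _).union (countable_range _),
    hXc.trans (closure_mono fun z hz => ?_)⟩
  have hmem : ∀ w ∈ range z ∪ range (y z),
      w ∈ StarAlgebra.adjoin R (⋃ z ∈ c, range z ∪ range (y z)) :=
    fun w hw => StarAlgebra.subset_adjoin R _ (mem_biUnion hz hw)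
  refine ⟨fun i => ⟨z i, hmem _ (.inl ⟨i, rfl⟩)⟩,
    ⟨fun i => Subtype.ext ((hcA hz).1 i), fun i => ⟨y z i, hmem _ (.inr ⟨i, rfl⟩)⟩, ?_⟩, rfl⟩
  ext
  simpa using hy z hz

end StarSubalgebra

section Topological

variable {r : ℕ} {R A : Type*} [CommRing R] [StarRing R] [TopologicalSpace R] [SeparableSpace R]
  [Ring A] [StarRing A] [Algebra R A] [StarModule R A] [TopologicalSpace A]
  [PseudoMetrizableSpace A] [IsTopologicalRing A] [ContinuousStar A] [ContinuousSMul R A]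

theorem StarSubalgebra.exists_isSeparable_le_and_subset_closure_lgSa
    (hA : {x : Fin (r + 1) → A | ∀ i, IsSelfAdjoint (x i)} ⊆ closure (LgSa r A))
    (C : StarSubalgebra R A) (hC : IsSeparable (C : Set A)) :
    ∃ D : StarSubalgebra R A, IsSeparable (D : Set A) ∧ C ≤ D ∧
      {x : Fin (r + 1) → A | ∀ i, x i ∈ C ∧ IsSelfAdjoint (x i)} ⊆
        closure (Pi.map (fun _ => Subtype.val) '' LgSa r D) := by
  have hX : IsSeparable {x : Fin (r + 1) → A | ∀ i, x i ∈ C ∧ IsSelfAdjoint (x i)} :=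
    isSeparable_pi (s := fun _ => (C : Set A) ∩ {a | IsSelfAdjoint a})
      fun _ => hC.mono inter_subset_left
  obtain ⟨t, htc, hXt⟩ :=
    exists_countable_subset_closure_image_lgSa (R := R) hX fun x hx => hA fun i => (hx i).2
  refine ⟨StarAlgebra.adjoin R (C ∪ t), (hC.union htc.isSeparable).starAlgebraAdjoin,
    fun a ha => StarAlgebra.subset_adjoin R _ (.inl ha), hXt.trans (closure_mono ?_)⟩
  exact image_val_lgSa_mono (StarAlgebra.adjoin_mono subset_union_right)

end Topological

section Complex

open ComplexStarModule

variable {A : Type*} [Ring A] [StarRing A] [Algebra ℂ A] [StarModule ℂ A]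

theorem realPart_coe_eq_smul (a : A) : (ℜ a : A) = (2⁻¹ : ℂ) • (a + star a) := by
  rw [realPart_apply_coe, ← Complex.coe_smul, Complex.ofReal_inv, Complex.ofReal_ofNat]

theorem StarSubalgebra.realPart_mem (S : StarSubalgebra ℂ A) {a : A} (ha : a ∈ S) :
    (ℜ a : A) ∈ S := by
  rw [realPart_coe_eq_smul]
  exact S.smul_mem (add_mem ha (star_mem ha)) _

variable {r : ℕ} [TopologicalSpace A] [IsTopologicalRing A] [ContinuousStar A]
  [ContinuousConstSMul ℂ A]

theorem StarSubalgebra.subset_closure_lgSa_topologicalClosure_iSup {C : ℕ → StarSubalgebra ℂ A}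
    (hC : Monotone C)
    (hstep : ∀ n, {x : Fin (r + 1) → A | ∀ i, x i ∈ C n ∧ IsSelfAdjoint (x i)} ⊆
      closure (Pi.map (fun _ => Subtype.val) '' LgSa r (C (n + 1)))) :
    {x : Fin (r + 1) → (⨆ n, C n).topologicalClosure | ∀ i, IsSelfAdjoint (x i)} ⊆
      closure (LgSa r (⨆ n, C n).topologicalClosure) := by
  intro x hx
  rw [(IsInducing.piMap fun _ => IsInducing.subtypeVal).closure_eq_preimage_closure_image,
    mem_preimage]
  let x' := Pi.map (fun _ => Subtype.val) x
  -- Taking real parts fixes `x'` and makes approximants from the `C n` self-adjoint.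
  let re : (Fin (r + 1) → A) → (Fin (r + 1) → A) := Pi.map fun _ a => (ℜ a : A)
  have hre : Continuous re := by
    simp only [re, realPart_coe_eq_smul]
    fun_prop
  have hx'_re : re x' = x' := funext fun i => ((hx i).map (StarSubalgebra.subtype _)).coe_realPart
  have hx'_mem : x' ∈ closure (⋃ n, pi univ fun _ => (C n : Set A)) := by
    rw [iUnion_univ_pi_of_monotone fun _ _ _ h => hC h, closure_pi_set,
      ← coe_iSup_of_directed hC.directed_le]
    exact fun i _ => (x i).2
  have hmaps : MapsTo re (⋃ n, pi univ fun _ => (C n : Set A))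
      (closure (Pi.map (fun _ => Subtype.val) '' LgSa r (⨆ n, C n).topologicalClosure)) := by
    simp only [MapsTo, mem_iUnion]
    rintro y ⟨n, hy⟩
    refine closure_mono (image_val_lgSa_mono ((le_iSup C (n + 1)).trans (le_topologicalClosure _)))
      (hstep n fun i => ⟨(C n).realPart_mem (hy i trivial), (ℜ (y i)).2⟩)
  have h := map_mem_closure hre hx'_mem hmaps
  rwa [hx'_re, closure_closure] at h

end Complex

theorem exists_separable_intermediate_subalgebra_real_rank_general
    (N : Type*) [CStarAlgebra N] (r : ℕ)
    (hN : {x : Fin (r + 1) → N | ∀ i, IsSelfAdjoint (x i)} ⊆ closure (LgSa r N))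
    (A : StarSubalgebra ℂ N)
    (hA_sep : TopologicalSpace.SeparableSpace A) :
    ∃ B : StarSubalgebra ℂ N, IsClosed (B : Set N) ∧
      TopologicalSpace.SeparableSpace B ∧ A ≤ B ∧ (1 : N) ∈ B ∧
      {x : Fin (r + 1) → B | ∀ i, IsSelfAdjoint (x i)} ⊆ closure (LgSa r B) := by
  obtain ⟨C, rfl, hC_sep, hC_step⟩ := exists_seq_of_forall_exists_rel
    (StarSubalgebra.exists_isSeparable_le_and_subset_closure_lgSa hN)
    (IsSeparable.of_subtype (A : Set N))
  have hC_mono : Monotone C := monotone_nat_of_le_succ fun n => (hC_step n).1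
  refine ⟨(⨆ n, C n).topologicalClosure, (⨆ n, C n).isClosed_topologicalClosure, ?_,
    (le_iSup C 0).trans (StarSubalgebra.le_topologicalClosure _), one_mem _,
    StarSubalgebra.subset_closure_lgSa_topologicalClosure_iSup hC_mono fun n => (hC_step n).2⟩
  refine IsSeparable.separableSpace ?_
  rw [StarSubalgebra.topologicalClosure_coe,
    StarSubalgebra.coe_iSup_of_directed hC_mono.directed_le]
  exact (IsSeparable.iUnion hC_sep).closure

/-- If `N` is a unital C*-algebra in which the self-adjoint tuples generating `N` as a
left ideal are dense in `(N_sa)^{r+1}`, and `A ⊆ N` is a separable C*-subalgebra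
containing the unit, then there is a separable C*-subalgebra `B` with `A ⊆ B ⊆ N`,
`1 ∈ B`, enjoying the same density property. -/
theorem exists_separable_intermediate_subalgebra_real_rank
    (N : Type*) [CStarAlgebra N] (r : ℕ)
    (hN : {x : Fin (r + 1) → N | ∀ i, IsSelfAdjoint (x i)} ⊆ closure (LgSa r N))
    (A : StarSubalgebra ℂ N) (hA_closed : IsClosed (A : Set N))
    (hA_sep : TopologicalSpace.SeparableSpace A) :
    ∃ B : StarSubalgebra ℂ N, IsClosed (B : Set N) ∧
      TopologicalSpace.SeparableSpace B ∧ A ≤ B ∧ (1 : N) ∈ B ∧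
      {x : Fin (r + 1) → B | ∀ i, IsSelfAdjoint (x i)} ⊆ closure (LgSa r B) :=
  exists_separable_intermediate_subalgebra_real_rank_general N r hN A hA_sep
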